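/- For positive integers s₁, s₂, the bivariate series f_{(s₁,s₂)}(x₁,x₂) = ∑_{m₁,m₂≥0} ( (s₁m₁+s₂m₂)! / ((s₁m₁)!(s₂m₂)!) ) x₁^{m₁} x₂^{m₂} defines a rational function of (x₁,x₂). -/

import Mathlib

open scoped Nat

/-- A bivariate sequence of coefficients is the Taylor series of a rational function
(with denominator non-vanishing at the origin). -/
def IsRationalBivariateSeries (a : ℕ → ℕ → ℂ) : Prop :=
  ∃ p q : MvPolynomial (Fin 2) ℂ, MvPolynomial.eval (fun _ => (0 : ℂ)) q ≠ 0 ∧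
    ∃ ε > (0 : ℝ), ∀ x y : ℂ, ‖x‖ < ε → ‖y‖ < ε →
      HasSum (fun mn : ℕ × ℕ => a mn.1 mn.2 * x ^ mn.1 * y ^ mn.2)
        (MvPolynomial.eval ![x, y] p / MvPolynomial.eval ![x, y] q)

/-!
The coefficient `(i + j)! / (i! j!)` is that of `x ^ i * y ^ j` in `1 / (1 - x - y)`. Averaging
`1 / (1 - α u - β v)` over all `s₁`-th roots of unity `α` and `s₂`-th roots of unity `β` keeps
exactly the monomials `u ^ (s₁ m₁) * v ^ (s₂ m₂)` of that series (as `∑ α, α ^ M` vanishes unless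
`s₁ ∣ M`), so `f (u ^ s₁, v ^ s₂) = (s₁ s₂)⁻¹ * ∑ 1 / (1 - α u - β v)`. Over the common denominator
`∏ (1 - α X - β Y)`, numerator and denominator are invariant under `X ↦ α X, Y ↦ β Y`, hence
polynomials in `X ^ s₁` and `Y ^ s₂`, and these exhibit `f` as a rational function.
-/

open Finset

theorem sum_antidiagonal_choose_mul_pow_mul_pow {R : Type*} [CommSemiring R] (x y : R) (n : ℕ) :
    ∑ p : antidiagonal n, ((p.1.1 + p.1.2).choose p.1.1 : R) * x ^ p.1.1 * y ^ p.1.2 =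
      (x + y) ^ n := by
  rw [(Commute.all x y).add_pow', ← (antidiagonal n).sum_coe_sort]
  refine sum_congr rfl fun p _ => ?_
  rw [mem_antidiagonal.1 p.2, nsmul_eq_mul, mul_assoc]

theorem summable_choose_mul_pow_mul_pow {r s : ℝ} (hr : 0 ≤ r) (hs : 0 ≤ s) (h : r + s < 1) :
    Summable fun p : ℕ × ℕ => ((p.1 + p.2).choose p.1 : ℝ) * r ^ p.1 * s ^ p.2 := by
  rw [← HasAntidiagonal.sigmaAntidiagonalEquivProd.summable_iff,
    summable_sigma_of_nonneg fun _ => by dsimp; positivity]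
  refine ⟨fun n => (hasSum_fintype _).summable, ?_⟩
  simp only [Function.comp_apply, HasAntidiagonal.sigmaAntidiagonalEquivProd_apply, tsum_fintype,
    sum_antidiagonal_choose_mul_pow_mul_pow]
  exact summable_geometric_of_lt_one (by positivity) h

theorem hasSum_choose_mul_pow_mul_pow {𝕜 : Type*} [NormedField 𝕜] [CompleteSpace 𝕜] {x y : 𝕜}
    (h : ‖x‖ + ‖y‖ < 1) :
    HasSum (fun p : ℕ × ℕ => ((p.1 + p.2).choose p.1 : 𝕜) * x ^ p.1 * y ^ p.2) (1 - x - y)⁻¹ := by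
  have hsum : Summable fun p : ℕ × ℕ => ((p.1 + p.2).choose p.1 : 𝕜) * x ^ p.1 * y ^ p.2 := by
    refine .of_norm_bounded (summable_choose_mul_pow_mul_pow (norm_nonneg x) (norm_nonneg y) h)
      fun p => ?_
    simp only [norm_mul, norm_pow]
    gcongr
    simpa using Nat.norm_cast_le (α := 𝕜) _
  rw [← HasAntidiagonal.sigmaAntidiagonalEquivProd.hasSum_iff]
  refine .sigma_of_hasSum (g := fun n => (x + y) ^ n) ?_ (fun n => ?_)
    (HasAntidiagonal.sigmaAntidiagonalEquivProd.summable_iff.2 hsum)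
  · rw [sub_sub]
    exact hasSum_geometric_of_norm_lt_one ((norm_add_le x y).trans_lt h)
  · rw [← sum_antidiagonal_choose_mul_pow_mul_pow]
    exact hasSum_fintype _

section RootsOfUnity

theorem forall_rootsOfUnity_pow_eq_one_iff {M : Type*} [CommMonoid M] (n : ℕ) [NeZero n]
    [HasEnoughRootsOfUnity M n] (k : ℕ) :
    (∀ ζ : rootsOfUnity n M, ((ζ : Mˣ) : M) ^ k = 1) ↔ n ∣ k := by
  have hexp : Monoid.exponent (rootsOfUnity n M) = n := by
    rw [IsCyclic.exponent_eq_card, HasEnoughRootsOfUnity.natCard_rootsOfUnity]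
  have hval (ζ : rootsOfUnity n M) : ((ζ : Mˣ) : M) ^ k = 1 ↔ ζ ^ k = 1 := by
    rw [← Units.val_pow_eq_pow_val, Units.val_eq_one, ← Subgroup.coe_pow, OneMemClass.coe_eq_one]
  simp_rw [hval, ← Monoid.exponent_dvd_iff_forall_pow_eq_one, hexp]

variable {R : Type*} [CommRing R] [IsDomain R] (n m : ℕ) [NeZero n] [NeZero m]
  [HasEnoughRootsOfUnity R n] [HasEnoughRootsOfUnity R m]

theorem natCast_ne_zero_of_hasEnoughRootsOfUnity : (n : R) ≠ 0 :=
  (HasEnoughRootsOfUnity.exists_primitiveRoot R n).choose_spec.neZero'.out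

variable [Fintype (rootsOfUnity n R)] [Fintype (rootsOfUnity m R)]

theorem sum_rootsOfUnity_pow (k : ℕ) :
    ∑ ζ : rootsOfUnity n R, ((ζ : Rˣ) : R) ^ k = if n ∣ k then (n : R) else 0 := by
  classical
  let χ : rootsOfUnity n R →* R :=
    (powMonoidHom k).comp ((Units.coeHom R).comp (rootsOfUnity n R).subtype)
  have hχ : χ = 1 ↔ n ∣ k := by
    rw [← forall_rootsOfUnity_pow_eq_one_iff (M := R) n k, DFunLike.ext_iff]
    rfl
  have hcard : Fintype.card (rootsOfUnity n R) = n := by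
    rw [← Nat.card_eq_fintype_card, HasEnoughRootsOfUnity.natCard_rootsOfUnity]
  change ∑ ζ, χ ζ = _
  rw [sum_hom_units, hcard]
  simp only [hχ]
  split_ifs <;> simp

theorem sum_rootsOfUnity_prod_pow_mul_pow (k l : ℕ) :
    ∑ g : rootsOfUnity n R × rootsOfUnity m R, ((g.1 : Rˣ) : R) ^ k * ((g.2 : Rˣ) : R) ^ l =
      if n ∣ k ∧ m ∣ l then (n * m : R) else 0 := by
  simp only [Fintype.sum_prod_type, ← mul_sum, ← sum_mul, sum_rootsOfUnity_pow,
    ite_zero_mul_ite_zero]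

end RootsOfUnity

theorem Finset.sum_inv_eq_sum_prod_erase_div {ι K : Type*} [Field K] [DecidableEq ι]
    (s : Finset ι) {f : ι → K} (hf : ∀ i ∈ s, f i ≠ 0) :
    ∑ i ∈ s, (f i)⁻¹ = (∑ i ∈ s, ∏ j ∈ s.erase i, f j) / ∏ i ∈ s, f i := by
  rw [eq_div_iff (prod_ne_zero_iff.2 hf), sum_mul]
  refine sum_congr rfl fun i hi => ?_
  rw [← mul_prod_erase s f hi, ← mul_assoc, inv_mul_cancel₀ (hf i hi), one_mul]

theorem Equiv.Perm.sum_prod_erase_comp {ι M : Type*} [Fintype ι] [DecidableEq ι]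
    [CommSemiring M] (e : Equiv.Perm ι) (f : ι → M) :
    ∑ i, ∏ j ∈ univ.erase i, f (e j) = ∑ i, ∏ j ∈ univ.erase i, f j :=
  calc ∑ i, ∏ j ∈ univ.erase i, f (e j) = ∑ i, ∏ j ∈ univ.erase (e i), f j :=
        sum_congr rfl fun i _ => prod_equiv e (by simp) (by simp)
    _ = ∑ i, ∏ j ∈ univ.erase i, f j := Equiv.sum_comp e fun i => ∏ j ∈ univ.erase i, f j

namespace MvPolynomial

variable {R σ : Type*} [CommSemiring R]

theorem aeval_C_mul_X_monomial (c : σ → R) (e : σ →₀ ℕ) (r : R) :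
    aeval (fun i => C (c i) * X i) (monomial e r) =
      monomial e ((e.prod fun i k => c i ^ k) * r) := by
  simp only [aeval_monomial, mul_pow, Finsupp.prod_mul, ← map_pow]
  rw [← map_finsuppProd, algebraMap_eq, monomial_eq, ← mul_assoc, ← C_mul, mul_comm r]

theorem coeff_aeval_C_mul_X (c : σ → R) (p : MvPolynomial σ R) (d : σ →₀ ℕ) :
    coeff d (aeval (fun i => C (c i) * X i) p) = (d.prod fun i k => c i ^ k) * coeff d p := by
  classical
  induction p using induction_on' with
  | monomial e r =>
    rw [aeval_C_mul_X_monomial, coeff_monomial, coeff_monomial]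
    split_ifs with h
    · rw [h]
    · rw [mul_zero]
  | add p q hp hq => rw [map_add, coeff_add, coeff_add, hp, hq, mul_add]

theorem exists_eval_pow_eq_eval (k : σ → ℕ) (p : MvPolynomial σ R)
    (hp : ∀ d ∈ p.support, ∀ i, k i ∣ d i) :
    ∃ q : MvPolynomial σ R, ∀ x : σ → R, eval (fun i => x i ^ k i) q = eval x p := by
  refine ⟨∑ d ∈ p.support, C (coeff d p) * ∏ i ∈ d.support, X i ^ (d i / k i), fun x => ?_⟩
  simp only [eval_eq x p, map_sum, map_mul, eval_C, map_prod, map_pow, eval_X, ← pow_mul]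
  refine sum_congr rfl fun d hd => congr_arg _ (prod_congr rfl fun i _ => ?_)
  rw [Nat.mul_div_cancel' (hp d hd i)]

end MvPolynomial

namespace Multisection

open MvPolynomial

noncomputable section

section CommRing

variable {R : Type*} [CommRing R] {a b : ℕ}

def scale (h : rootsOfUnity a R × rootsOfUnity b R) :
    MvPolynomial (Fin 2) R →ₐ[R] MvPolynomial (Fin 2) R :=
  aeval fun i => C (![((h.1 : Rˣ) : R), (h.2 : Rˣ)] i) * X i

def linearForm (g : rootsOfUnity a R × rootsOfUnity b R) : MvPolynomial (Fin 2) R :=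
  1 - C ((g.1 : Rˣ) : R) * X 0 - C ((g.2 : Rˣ) : R) * X 1

@[simp]
theorem eval_linearForm (x : Fin 2 → R) (g : rootsOfUnity a R × rootsOfUnity b R) :
    eval x (linearForm g) = 1 - (g.1 : Rˣ) * x 0 - (g.2 : Rˣ) * x 1 := by
  simp [linearForm]

theorem scale_linearForm (h g : rootsOfUnity a R × rootsOfUnity b R) :
    scale h (linearForm g) = linearForm (h * g) := by
  simp only [scale, linearForm, map_sub, map_one, map_mul, aeval_C, aeval_X, algebraMap_eq,
    Matrix.cons_val_zero, Matrix.cons_val_one, Prod.fst_mul, Prod.snd_mul, Subgroup.coe_mul,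
    Units.val_mul]
  ring

theorem dvd_of_mem_support_of_forall_scale_eq [IsDomain R] [NeZero a] [NeZero b]
    [HasEnoughRootsOfUnity R a] [HasEnoughRootsOfUnity R b] {p : MvPolynomial (Fin 2) R}
    (hp : ∀ h : rootsOfUnity a R × rootsOfUnity b R, scale h p = p)
    {d : Fin 2 →₀ ℕ} (hd : d ∈ p.support) : a ∣ d 0 ∧ b ∣ d 1 := by
  have hweight (h : rootsOfUnity a R × rootsOfUnity b R) :
      ((h.1 : Rˣ) : R) ^ d 0 * ((h.2 : Rˣ) : R) ^ d 1 = 1 := by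
    have := coeff_aeval_C_mul_X ![((h.1 : Rˣ) : R), (h.2 : Rˣ)] p d
    rw [← scale, hp h, Finsupp.prod_fintype _ _ (by simp), Fin.prod_univ_two] at this
    exact (mul_eq_right₀ (mem_support_iff.1 hd)).1 this.symm
  exact ⟨(forall_rootsOfUnity_pow_eq_one_iff a _).1 fun ζ => by simpa using hweight (ζ, 1),
    (forall_rootsOfUnity_pow_eq_one_iff b _).1 fun ζ => by simpa using hweight (1, ζ)⟩

variable [Fintype (rootsOfUnity a R)] [Fintype (rootsOfUnity b R)]

variable (R a b) in
def denom : MvPolynomial (Fin 2) R :=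
  ∏ g : rootsOfUnity a R × rootsOfUnity b R, linearForm g

-- `numer / denom = ∑ g, 1 / linearForm g`
open scoped Classical in
variable (R a b) in
def numer : MvPolynomial (Fin 2) R :=
  ∑ g : rootsOfUnity a R × rootsOfUnity b R, ∏ g' ∈ univ.erase g, linearForm g'

theorem scale_denom (h : rootsOfUnity a R × rootsOfUnity b R) :
    scale h (denom R a b) = denom R a b := by
  simp only [denom, map_prod, scale_linearForm]
  exact Equiv.prod_comp (Equiv.mulLeft h) linearForm

theorem scale_numer (h : rootsOfUnity a R × rootsOfUnity b R) :
    scale h (numer R a b) = numer R a b := by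
  classical
  simp only [numer, map_sum, map_prod, scale_linearForm]
  exact (Equiv.mulLeft h).sum_prod_erase_comp linearForm

end CommRing

variable {K : Type*} [Field K] {a b : ℕ} [NeZero a] [NeZero b]
  [HasEnoughRootsOfUnity K a] [HasEnoughRootsOfUnity K b]
  [Fintype (rootsOfUnity a K)] [Fintype (rootsOfUnity b K)]

theorem exists_eval_pow_div_eval_pow_eq_sum_inv :
    ∃ p q : MvPolynomial (Fin 2) K, eval (fun _ => 0) q = 1 ∧
      ∀ u v : K, (∀ g : rootsOfUnity a K × rootsOfUnity b K,
          1 - (g.1 : Kˣ) * u - (g.2 : Kˣ) * v ≠ 0) →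
        eval ![u ^ a, v ^ b] p / eval ![u ^ a, v ^ b] q =
          ∑ g : rootsOfUnity a K × rootsOfUnity b K, (1 - (g.1 : Kˣ) * u - (g.2 : Kˣ) * v)⁻¹ := by
  have hdvd {r : MvPolynomial (Fin 2) K}
      (hr : ∀ h : rootsOfUnity a K × rootsOfUnity b K, scale h r = r) :
      ∀ d ∈ r.support, ∀ i, ![a, b] i ∣ d i := fun d hd =>
    Fin.forall_fin_two.2 (dvd_of_mem_support_of_forall_scale_eq hr hd)
  obtain ⟨p, hp⟩ := exists_eval_pow_eq_eval _ _ (hdvd scale_numer)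
  obtain ⟨q, hq⟩ := exists_eval_pow_eq_eval _ _ (hdvd scale_denom)
  have hpow (u v : K) : (fun i => ![u, v] i ^ ![a, b] i) = ![u ^ a, v ^ b] := by
    ext i; fin_cases i <;> rfl
  refine ⟨p, q, ?_, fun u v huv => ?_⟩
  · have hzero : (fun _ => 0 : Fin 2 → K) = ![0 ^ a, 0 ^ b] := by
      ext i; fin_cases i <;> simp [NeZero.ne]
    rw [hzero, ← hpow, hq]
    simp [denom]
  · classical
    rw [← hpow, hp, hq, sum_inv_eq_sum_prod_erase_div univ fun g _ => huv g]
    simp [numer, denom]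

end

end Multisection

section SeriesMultisection

variable {K : Type*} [Field K] [TopologicalSpace K] [IsTopologicalRing K] {a b : ℕ}
  [NeZero a] [NeZero b] [HasEnoughRootsOfUnity K a] [HasEnoughRootsOfUnity K b]
  [Fintype (rootsOfUnity a K)] [Fintype (rootsOfUnity b K)]

theorem hasSum_multisection (c : ℕ → ℕ → K) {u v : K}
    {S : rootsOfUnity a K × rootsOfUnity b K → K}
    (hS : ∀ g, HasSum (fun p : ℕ × ℕ =>
      c p.1 p.2 * ((g.1 : Kˣ) * u) ^ p.1 * ((g.2 : Kˣ) * v) ^ p.2) (S g)) :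
    HasSum (fun p : ℕ × ℕ => c (a * p.1) (b * p.2) * u ^ (a * p.1) * v ^ (b * p.2))
      ((a * b : K)⁻¹ * ∑ g, S g) := by
  set F : ℕ × ℕ → K := fun p => (a * b : K)⁻¹ * ∑ g : rootsOfUnity a K × rootsOfUnity b K,
    c p.1 p.2 * ((g.1 : Kˣ) * u) ^ p.1 * ((g.2 : Kˣ) * v) ^ p.2
  have hF : HasSum F ((a * b : K)⁻¹ * ∑ g, S g) := (hasSum_sum fun g _ => hS g).mul_left _
  have hFval (M N : ℕ) : F (M, N) = if a ∣ M ∧ b ∣ N then c M N * u ^ M * v ^ N else 0 := by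
    have : F (M, N) = (a * b : K)⁻¹ * (c M N * u ^ M * v ^ N * ∑ g : rootsOfUnity a K ×
        rootsOfUnity b K, ((g.1 : Kˣ) : K) ^ M * ((g.2 : Kˣ) : K) ^ N) := by
      simp only [F, mul_sum]
      exact sum_congr rfl fun g _ => by ring
    rw [this, sum_rootsOfUnity_prod_pow_mul_pow]
    split_ifs
    · rw [mul_comm]
      exact mul_inv_cancel_right₀ (mul_ne_zero (natCast_ne_zero_of_hasEnoughRootsOfUnity a)
        (natCast_ne_zero_of_hasEnoughRootsOfUnity b)) _
    · rw [mul_zero, mul_zero]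
  have hinj : Function.Injective fun p : ℕ × ℕ => (a * p.1, b * p.2) := fun p q hpq =>
    Prod.ext (Nat.eq_of_mul_eq_mul_left (NeZero.pos a) (Prod.ext_iff.1 hpq).1)
      (Nat.eq_of_mul_eq_mul_left (NeZero.pos b) (Prod.ext_iff.1 hpq).2)
  have hsupp : ∀ p ∉ Set.range fun p : ℕ × ℕ => (a * p.1, b * p.2), F p = 0 := by
    rintro ⟨M, N⟩ hp
    rw [hFval, if_neg]
    rintro ⟨⟨m, rfl⟩, ⟨n, rfl⟩⟩
    exact hp ⟨(m, n), rfl⟩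
  rw [← hinj.hasSum_iff hsupp] at hF
  exact hF.congr_fun fun p => by simp [hFval]

end SeriesMultisection

theorem one_sub_sub_ne_zero_of_norm_add_lt_one {𝕜 : Type*} [NormedField 𝕜] {x y : 𝕜}
    (h : ‖x‖ + ‖y‖ < 1) : 1 - x - y ≠ 0 := by
  rw [sub_sub, sub_ne_zero]
  intro hxy
  have := (norm_add_le x y).trans_lt h
  rw [← hxy, norm_one] at this
  exact lt_irrefl _ this

theorem exists_pow_eq_and_norm_lt {𝕜 : Type*} [NormedField 𝕜] [IsAlgClosed 𝕜] {n : ℕ}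
    (hn : n ≠ 0) {x : 𝕜} {r : ℝ} (hr : 0 ≤ r) (hx : ‖x‖ < r ^ n) :
    ∃ u, u ^ n = x ∧ ‖u‖ < r := by
  obtain ⟨u, hu⟩ := IsAlgClosed.exists_pow_nat_eq x (Nat.pos_of_ne_zero hn)
  refine ⟨u, hu, lt_of_pow_lt_pow_left₀ n hr ?_⟩
  rwa [← norm_pow, hu]

theorem f_s1_s2_is_rational (s₁ s₂ : ℕ) (hs₁ : 0 < s₁) (hs₂ : 0 < s₂) :
    IsRationalBivariateSeries
      (fun m₁ m₂ => ((s₁ * m₁ + s₂ * m₂)! : ℂ) / ((s₁ * m₁)! * (s₂ * m₂)!)) := by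
  have := NeZero.of_pos hs₁
  have := NeZero.of_pos hs₂
  let := Fintype.ofFinite (rootsOfUnity s₁ ℂ)
  let := Fintype.ofFinite (rootsOfUnity s₂ ℂ)
  obtain ⟨p, q, hq0, hpq⟩ :=
    Multisection.exists_eval_pow_div_eval_pow_eq_sum_inv (K := ℂ) (a := s₁) (b := s₂)
  refine ⟨p, MvPolynomial.C (s₁ * s₂ : ℂ) * q, ?_, min (2⁻¹ ^ s₁) (2⁻¹ ^ s₂), by positivity,
    fun x y hx hy => ?_⟩
  · rw [map_mul, MvPolynomial.eval_C, hq0]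
    simp [hs₁.ne', hs₂.ne']
  obtain ⟨u, rfl, hu⟩ :=
    exists_pow_eq_and_norm_lt hs₁.ne' (by norm_num) (hx.trans_le (min_le_left _ _))
  obtain ⟨v, rfl, hv⟩ :=
    exists_pow_eq_and_norm_lt hs₂.ne' (by norm_num) (hy.trans_le (min_le_right _ _))
  have hnorm (g : rootsOfUnity s₁ ℂ × rootsOfUnity s₂ ℂ) :
      ‖((g.1 : ℂˣ) : ℂ) * u‖ + ‖((g.2 : ℂˣ) : ℂ) * v‖ < 1 := by
    simp only [norm_mul, Complex.norm_eq_one_of_mem_rootsOfUnity g.1.2,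
      Complex.norm_eq_one_of_mem_rootsOfUnity g.2.2, one_mul]
    linarith
  rw [map_mul, MvPolynomial.eval_C, mul_comm, ← div_div,
    hpq u v fun g => one_sub_sub_ne_zero_of_norm_add_lt_one (hnorm g), div_eq_inv_mul]
  refine (hasSum_multisection (fun i j => ((i + j).choose i : ℂ))
    fun g => hasSum_choose_mul_pow_mul_pow (hnorm g)).congr_fun fun p => ?_
  rw [Nat.cast_add_choose, pow_mul, pow_mul]
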